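/- Let (Ω,F,μ) be a finite measure space, 1 < p < ∞, and let f_n ⇀ f weakly in L^p(μ). Let φ : ℝ → ℝ be convex with φ(f_n) ⇀ φ(f) weakly in L¹(μ). Let C ⊆ ℝ be the set where φ is strictly convex (every point of C has a neighborhood on which φ is strictly convex). Then there is a μ-full set Ω' such that, after passing to a subsequence, f_n(ω) → f(ω) for μ-a.e. ω ∈ Ω' with f(ω) ∈ C. -/

import Mathlib

/-!
Fix a measurable subgradient selection `q` of `φ` (its right derivative) and consider the Bregman
remainder `D_n = φ(f_n) - φ(f) - q(f) (f_n - f) ≥ 0`. Against the bounded weight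
`w = (1 + |q(f)|)⁻¹`, both `w` and `w q(f)` are bounded measurable test functions, so the two weak
convergences give `∫ w D_n → 0`. Hence `w D_n → 0` in `L¹`, a subsequence converges a.e., and since
`w > 0` also `D_n → 0` a.e. along it. Finally, where `φ` is strictly convex near `f(ω)`, the convex
function `y ↦ φ(y) - φ(f(ω)) - q(f(ω)) (y - f(ω))` has a strict minimum `0` at `f(ω)` and is bounded
away from `0` outside every neighbourhood of it, so `D_n(ω) → 0` forces `f_n(ω) → f(ω)`.
-/

open MeasureTheory Filter Topology Set

def bregman (φ q : ℝ → ℝ) (x y : ℝ) : ℝ := φ y - φ x - q x * (y - x)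

section Bregman

variable {φ q : ℝ → ℝ}

lemma bregman_self (x : ℝ) : bregman φ q x x = 0 := by simp [bregman]

lemma bregman_nonneg (hq : ∀ x y, q x * (y - x) ≤ φ y - φ x) (x y : ℝ) :
    0 ≤ bregman φ q x y := by
  have := hq x y
  unfold bregman; linarith

lemma mul_bregman_eq (w : ℝ → ℝ) (x y : ℝ) : w x * bregman φ q x y =
    (φ y * w x - y * (w x * q x)) - (φ x * w x - x * (w x * q x)) := by
  unfold bregman; ring

lemma concaveOn_affine {s : Set ℝ} (hs : Convex ℝ s) (a b : ℝ) :
    ConcaveOn ℝ s fun y => a * y + b :=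
  ⟨hs, fun y _ z _ c d _ _ hcd => le_of_eq <| by
    simp only [smul_eq_mul]; linear_combination b * hcd⟩

lemma bregman_eq_sub (x : ℝ) :
    bregman φ q x = φ - fun y => q x * y + (φ x - q x * x) := by
  ext y; simp only [bregman, Pi.sub_apply]; ring

variable (q) in
lemma ConvexOn.bregman {s : Set ℝ} (hφ : ConvexOn ℝ s φ) (x : ℝ) :
    ConvexOn ℝ s (bregman φ q x) := by
  rw [bregman_eq_sub]; exact hφ.sub (concaveOn_affine hφ.1 _ _)

variable (q) in
lemma StrictConvexOn.bregman {s : Set ℝ} (hφ : StrictConvexOn ℝ s φ) (x : ℝ) :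
    StrictConvexOn ℝ s (bregman φ q x) := by
  rw [bregman_eq_sub]; exact hφ.sub_concaveOn (concaveOn_affine hφ.1 _ _)

end Bregman

lemma ConvexOn.rightDeriv_mul_sub_le {φ : ℝ → ℝ} (hφ : ConvexOn ℝ univ φ) (x y : ℝ) :
    derivWithin φ (Ioi x) x * (y - x) ≤ φ y - φ x := by
  have hx : x ∈ interior univ := by simp
  rcases lt_trichotomy x y with hxy | rfl | hyx
  · have h := hφ.rightDeriv_le_slope_of_mem_interior hx (mem_univ y) hxy
    rwa [slope_def_field, le_div_iff₀ (sub_pos.2 hxy)] at h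
  · simp
  · have h := (hφ.slope_le_leftDeriv_of_mem_interior (mem_univ y) hx hyx).trans
      (hφ.leftDeriv_le_rightDeriv_of_mem_interior hx)
    rw [slope_def_field, div_le_iff₀ (sub_pos.2 hyx)] at h
    linarith

lemma ConvexOn.monotone_rightDeriv {φ : ℝ → ℝ} (hφ : ConvexOn ℝ univ φ) :
    Monotone fun x => derivWithin φ (Ioi x) x := fun _ _ hxy =>
  hφ.monotoneOn_rightDeriv (by simp) (by simp) hxy

theorem ConvexOn.tendsto_of_tendsto_of_isMinOn {α : Type*} {h : ℝ → ℝ} {x ε : ℝ}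
    {l : Filter α} {y : α → ℝ} (hconv : ConvexOn ℝ univ h) (hmin : IsMinOn h univ x)
    (hε : 0 < ε) (hstrict : StrictConvexOn ℝ (Metric.ball x ε) h)
    (hy : Tendsto (fun i => h (y i)) l (𝓝 (h x))) : Tendsto y l (𝓝 x) := by
  rw [Metric.tendsto_nhds]
  intro δ hδ
  set r := min δ (ε / 2)
  have hr : 0 < r := lt_min hδ (half_pos hε)
  -- by uniqueness of the minimiser of a strictly convex function
  have hlt : ∀ z, |z - x| = r → h x < h z := by
    intro z hz
    refine (hmin (mem_univ z)).lt_of_ne fun heq => ?_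
    have hz_ball : z ∈ Metric.ball x ε := by
      rw [Metric.mem_ball, Real.dist_eq, hz]; exact (min_le_right _ _).trans_lt (half_lt_self hε)
    have hzmin : IsMinOn h (Metric.ball x ε) z := fun w _ => heq ▸ hmin (mem_univ w)
    have := hstrict.eq_of_isMinOn (hmin.on_subset (subset_univ _)) hzmin
      (Metric.mem_ball_self hε) hz_ball
    rw [← this, sub_self, abs_zero] at hz
    exact hr.ne hz
  -- maximum principle on the segment from the minimiser `x` to `z`
  have hbound : ∀ z, r ≤ |z - x| → min (h (x - r)) (h (x + r)) ≤ h z := by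
    intro z hz
    have hmax : ∀ a ∈ uIcc x z, h a ≤ h z := fun a ha =>
      (hconv.le_max_of_mem_segment (mem_univ x) (mem_univ z) (segment_eq_uIcc x z ▸ ha)).trans
        (max_le (hmin (mem_univ z)) le_rfl)
    rcases le_total x z with hxz | hzx
    · rw [abs_of_nonneg (sub_nonneg.2 hxz)] at hz
      exact (min_le_right _ _).trans (hmax _ (mem_uIcc.2 (Or.inl ⟨by linarith, by linarith⟩)))
    · rw [abs_of_nonpos (sub_nonpos.2 hzx)] at hz
      exact (min_le_left _ _).trans (hmax _ (mem_uIcc.2 (Or.inr ⟨by linarith, by linarith⟩)))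
  have hgap : h x < min (h (x - r)) (h (x + r)) :=
    lt_min (hlt _ (by simp [abs_of_pos hr])) (hlt _ (by simp [abs_of_pos hr]))
  filter_upwards [hy.eventually (gt_mem_nhds hgap)] with i hi
  rw [Real.dist_eq]
  by_contra! hge
  exact (hbound _ ((min_le_left _ _).trans hge)).not_gt hi

theorem tendsto_of_tendsto_bregman_zero {α : Type*} {l : Filter α} {y : α → ℝ}
    {φ q : ℝ → ℝ} {x ε : ℝ} (hφ : ConvexOn ℝ univ φ) (hq : ∀ x y, q x * (y - x) ≤ φ y - φ x)
    (hε : 0 < ε) (hstrict : StrictConvexOn ℝ (Metric.ball x ε) φ)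
    (hy : Tendsto (fun i => bregman φ q x (y i)) l (𝓝 0)) : Tendsto y l (𝓝 x) := by
  refine (hφ.bregman q x).tendsto_of_tendsto_of_isMinOn (isMinOn_univ_iff.2 fun z => ?_) hε
    (hstrict.bregman q x) (by rwa [bregman_self])
  rw [bregman_self]; exact bregman_nonneg hq x z

section Integration

variable {Ω : Type*} [MeasurableSpace Ω] {μ : Measure Ω}

theorem exists_seq_tendsto_ae_of_tendsto_integral_zero {G : ℕ → Ω → ℝ}
    (hG_nonneg : ∀ n, 0 ≤ᵐ[μ] G n) (hG_int : ∀ n, Integrable (G n) μ)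
    (hG : Tendsto (fun n => ∫ ω, G n ω ∂μ) atTop (𝓝 0)) :
    ∃ s : ℕ → ℕ, StrictMono s ∧ ∀ᵐ ω ∂μ, Tendsto (fun j => G (s j) ω) atTop (𝓝 0) := by
  have hnorm : ∀ n, eLpNorm (G n) 1 μ = ENNReal.ofReal (∫ ω, G n ω ∂μ) := fun n => by
    rw [eLpNorm_one_eq_lintegral_enorm,
      ofReal_integral_eq_lintegral_ofReal (hG_int n) (hG_nonneg n)]
    exact lintegral_congr_ae ((hG_nonneg n).mono fun ω hω => Real.enorm_of_nonneg hω)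
  have hmeas : TendstoInMeasure μ G atTop 0 :=
    tendstoInMeasure_of_tendsto_eLpNorm one_ne_zero (fun n => (hG_int n).aestronglyMeasurable)
      aestronglyMeasurable_const (by simpa [hnorm] using ENNReal.tendsto_ofReal hG)
  exact hmeas.exists_seq_tendsto_ae

lemma MeasureTheory.Integrable.mul_comp_of_bdd {f F : Ω → ℝ} (hf : Integrable f μ) {g : ℝ → ℝ}
    (hg : Measurable g) {c : ℝ} (hg_bdd : ∀ x, |g x| ≤ c) (hF : Measurable F) :
    Integrable (fun ω => f ω * g (F ω)) μ :=
  hf.mul_bdd (hg.comp hF).aestronglyMeasurable (.of_forall fun ω => hg_bdd (F ω))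

def TendstoAgainstBounded (μ : Measure Ω) (u : ℕ → Ω → ℝ) (v : Ω → ℝ) : Prop :=
  ∀ g : Ω → ℝ, Measurable g → (∃ C : ℝ, ∀ ω, |g ω| ≤ C) →
    Tendsto (fun n => ∫ ω, u n ω * g ω ∂μ) atTop (𝓝 (∫ ω, v ω * g ω ∂μ))

theorem tendstoAgainstBounded_of_forall_memLp [IsFiniteMeasure μ] {r : ENNReal}
    {u : ℕ → Ω → ℝ} {v : Ω → ℝ}
    (h : ∀ g : Ω → ℝ, MemLp g r μ →
      Tendsto (fun n => ∫ ω, u n ω * g ω ∂μ) atTop (𝓝 (∫ ω, v ω * g ω ∂μ))) :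
    TendstoAgainstBounded μ u v := fun g hg ⟨C, hC⟩ =>
  h g <| (memLp_top_of_bound hg.aestronglyMeasurable C (.of_forall hC)).mono_exponent le_top

theorem TendstoAgainstBounded.congr_right {u : ℕ → Ω → ℝ} {v v' : Ω → ℝ}
    (h : TendstoAgainstBounded μ u v) (hv : v =ᵐ[μ] v') : TendstoAgainstBounded μ u v' :=
  fun g hg hC => integral_congr_ae (hv.mul (ae_eq_refl g)) ▸ h g hg hC

variable {φ q w : ℝ → ℝ} {F : Ω → ℝ}

lemma integrable_mul_bregman (hw : Measurable w) (hwq : Measurable fun x => w x * q x)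
    {c : ℝ} (hw_bdd : ∀ x, |w x| ≤ c) (hwq_bdd : ∀ x, |w x * q x| ≤ c) (hF : Measurable F)
    (hF_int : Integrable F μ) (hφF : Integrable (fun ω => φ (F ω)) μ)
    {U : Ω → ℝ} (hU : Integrable U μ) (hφU : Integrable (fun ω => φ (U ω)) μ) :
    Integrable (fun ω => w (F ω) * bregman φ q (F ω) (U ω)) μ := by
  simp_rw [mul_bregman_eq]
  exact ((hφU.mul_comp_of_bdd hw hw_bdd hF).sub (hU.mul_comp_of_bdd hwq hwq_bdd hF)).sub
    ((hφF.mul_comp_of_bdd hw hw_bdd hF).sub (hF_int.mul_comp_of_bdd hwq hwq_bdd hF))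

theorem TendstoAgainstBounded.tendsto_integral_mul_bregman {u : ℕ → Ω → ℝ}
    (hlim : TendstoAgainstBounded μ u F)
    (hφlim : TendstoAgainstBounded μ (fun n ω => φ (u n ω)) fun ω => φ (F ω))
    (hw : Measurable w) (hwq : Measurable fun x => w x * q x)
    {c : ℝ} (hw_bdd : ∀ x, |w x| ≤ c) (hwq_bdd : ∀ x, |w x * q x| ≤ c) (hF : Measurable F)
    (hF_int : Integrable F μ) (hφF : Integrable (fun ω => φ (F ω)) μ)
    (hu : ∀ n, Integrable (u n) μ) (hφu : ∀ n, Integrable (fun ω => φ (u n ω)) μ) :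
    Tendsto (fun n => ∫ ω, w (F ω) * bregman φ q (F ω) (u n ω) ∂μ) atTop (𝓝 0) := by
  have hsplit : ∀ {U : Ω → ℝ}, Integrable U μ → Integrable (fun ω => φ (U ω)) μ →
      ∫ ω, w (F ω) * bregman φ q (F ω) (U ω) ∂μ =
        ((∫ ω, φ (U ω) * w (F ω) ∂μ) - ∫ ω, U ω * (w (F ω) * q (F ω)) ∂μ) -
          ((∫ ω, φ (F ω) * w (F ω) ∂μ) - ∫ ω, F ω * (w (F ω) * q (F ω)) ∂μ) := by
    intro U hU hφU
    have hφUw := hφU.mul_comp_of_bdd hw hw_bdd hF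
    have hUwq := hU.mul_comp_of_bdd hwq hwq_bdd hF
    have hφFw := hφF.mul_comp_of_bdd hw hw_bdd hF
    have hFwq := hF_int.mul_comp_of_bdd hwq hwq_bdd hF
    simp_rw [mul_bregman_eq]
    rw [integral_sub (by exact hφUw.sub hUwq) (by exact hφFw.sub hFwq), integral_sub hφUw hUwq,
      integral_sub hφFw hFwq]
  have hlim' := ((hφlim (fun ω => w (F ω)) (hw.comp hF) ⟨c, fun ω => hw_bdd (F ω)⟩).sub
    (hlim (fun ω => w (F ω) * q (F ω)) (hwq.comp hF) ⟨c, fun ω => hwq_bdd (F ω)⟩)).sub_const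
      ((∫ ω, φ (F ω) * w (F ω) ∂μ) - ∫ ω, F ω * (w (F ω) * q (F ω)) ∂μ)
  simp only [sub_self] at hlim'
  exact hlim'.congr fun n => (hsplit (hu n) (hφu n)).symm

theorem TendstoAgainstBounded.exists_seq_ae_tendsto_bregman_zero {u : ℕ → Ω → ℝ} {v : Ω → ℝ}
    (hlim : TendstoAgainstBounded μ u v)
    (hφlim : TendstoAgainstBounded μ (fun n ω => φ (u n ω)) fun ω => φ (v ω))
    (hq : Measurable q) (hsub : ∀ x y, q x * (y - x) ≤ φ y - φ x)
    (hu : ∀ n, Integrable (u n) μ) (hv : Integrable v μ)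
    (hφu : ∀ n, Integrable (fun ω => φ (u n ω)) μ) (hφv : Integrable (fun ω => φ (v ω)) μ) :
    ∃ s : ℕ → ℕ, StrictMono s ∧
      ∀ᵐ ω ∂μ, Tendsto (fun j => bregman φ q (v ω) (u (s j) ω)) atTop (𝓝 0) := by
  set F := hv.aemeasurable.mk v
  have hF : Measurable F := hv.aemeasurable.measurable_mk
  have hvF : v =ᵐ[μ] F := hv.aemeasurable.ae_eq_mk
  -- a positive weight `w` with `w` and `w * q` bounded, so both are admissible test functions
  set w : ℝ → ℝ := fun x => (1 + |q x|)⁻¹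
  have hw_pos : ∀ x, 0 < w x := fun x => by positivity
  have hw_bdd : ∀ x, |w x| ≤ 1 := fun x => by
    rw [abs_of_pos (hw_pos x)]; exact inv_le_one_of_one_le₀ (by linarith [abs_nonneg (q x)])
  have hwq_bdd : ∀ x, |w x * q x| ≤ 1 := fun x => by
    rw [abs_mul, abs_of_pos (hw_pos x), inv_mul_le_iff₀ (by positivity)]; linarith
  have hw : Measurable w := (hq.abs.const_add 1).inv
  have hwq : Measurable fun x => w x * q x := hw.mul hq
  have hF_int : Integrable F μ := hv.congr hvF
  have hφF : Integrable (fun ω => φ (F ω)) μ := hφv.congr (hvF.fun_comp φ)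
  obtain ⟨s, hs, hae⟩ := exists_seq_tendsto_ae_of_tendsto_integral_zero
    (G := fun n ω => w (F ω) * bregman φ q (F ω) (u n ω))
    (fun n => .of_forall fun ω => mul_nonneg (hw_pos _).le (bregman_nonneg hsub _ _))
    (fun n => integrable_mul_bregman hw hwq hw_bdd hwq_bdd hF hF_int hφF (hu n) (hφu n))
    ((hlim.congr_right hvF).tendsto_integral_mul_bregman (hφlim.congr_right (hvF.fun_comp φ))
      hw hwq hw_bdd hwq_bdd hF hF_int hφF hu hφu)
  refine ⟨s, hs, ?_⟩
  filter_upwards [hae, hvF] with ω hω hvω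
  rw [hvω]
  simpa [(hw_pos _).ne'] using hω.const_mul (w (F ω))⁻¹

end Integration

/-- **Convex function upgrade (Lemma B.3).**
Let `(Ω,F,μ)` be a finite measure space, `1 < p < ∞`, and `f_n ⇀ f` weakly in `L^p(μ)`.
Let `φ : ℝ → ℝ` be convex with `φ(f_n) ⇀ φ(f)` weakly in `L¹(μ)`, and let `C` be the
set where `φ` is strictly convex (points having a neighbourhood on which `φ` is
strictly convex).  Then, after passing to a subsequence, `f_n(ω) → f(ω)` for
μ-a.e. `ω` with `f(ω) ∈ C`. -/
theorem stmt_10 {Ω : Type*} [MeasurableSpace Ω] (μ : Measure Ω) [IsFiniteMeasure μ]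
    (p : ℝ) (hp : 1 < p)
    (f : ℕ → Ω → ℝ) (flim : Ω → ℝ)
    (hfmem : ∀ n, MemLp (f n) (ENNReal.ofReal p) μ)
    (hflim : MemLp flim (ENNReal.ofReal p) μ)
    (hweak : ∀ g : Ω → ℝ, MemLp g (ENNReal.ofReal (p / (p - 1))) μ →
      Filter.Tendsto (fun n => ∫ ω, f n ω * g ω ∂μ) Filter.atTop
        (nhds (∫ ω, flim ω * g ω ∂μ)))
    (φ : ℝ → ℝ) (hφ : ConvexOn ℝ Set.univ φ)
    (hφint : ∀ n, Integrable (fun ω => φ (f n ω)) μ)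
    (hφlimint : Integrable (fun ω => φ (flim ω)) μ)
    (hφweak : ∀ g : Ω → ℝ, Measurable g → (∃ C : ℝ, ∀ ω, |g ω| ≤ C) →
      Filter.Tendsto (fun n => ∫ ω, φ (f n ω) * g ω ∂μ) Filter.atTop
        (nhds (∫ ω, φ (flim ω) * g ω ∂μ)))
    (C : Set ℝ)
    (hC : ∀ x : ℝ, x ∈ C ↔ ∃ ε > 0, StrictConvexOn ℝ (Metric.ball x ε) φ) :
    ∃ s : ℕ → ℕ, StrictMono s ∧
      ∀ᵐ ω ∂μ, flim ω ∈ C →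
        Filter.Tendsto (fun j => f (s j) ω) Filter.atTop (nhds (flim ω)) := by
  have hp1 : (1 : ENNReal) ≤ ENNReal.ofReal p := ENNReal.one_le_ofReal.mpr hp.le
  obtain ⟨s, hs, hae⟩ :=
    (tendstoAgainstBounded_of_forall_memLp hweak).exists_seq_ae_tendsto_bregman_zero hφweak
      hφ.monotone_rightDeriv.measurable hφ.rightDeriv_mul_sub_le
      (fun n => (hfmem n).integrable hp1) (hflim.integrable hp1) hφint hφlimint
  refine ⟨s, hs, ?_⟩
  filter_upwards [hae] with ω hω hmem
  obtain ⟨ε, hε, hstrict⟩ := (hC (flim ω)).1 hmem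
  exact tendsto_of_tendsto_bregman_zero hφ hφ.rightDeriv_mul_sub_le hε hstrict hω
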